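/- Let σ be the scaled error function with scaling factor α > 0. For all x_i, x_j ∈ ℝ^F, the limiting NTK of infinite ensembles of perfect binary trees degenerates as depth grows: lim_{D→∞} Θ^{(D,PB)}(x_i,x_j) = 0, where Θ^{(D,PB)}(x_i,x_j) = 2^D·D·Σ(x_i,x_j)·T(x_i,x_j)^{D−1}·Ṫ(x_i,x_j) + (2·T(x_i,x_j))^D (this holds because 0 < T(x_i,x_j) < 1/2). -/

import Mathlib

open MeasureTheory ProbabilityTheory Filter

noncomputable section

/-- Euclidean inner product on `ℝ^F`. -/
def dot {F : ℕ} (u x : Fin F → ℝ) : ℝ := ∑ k, u k * x k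

/-- Standard Gaussian measure on `ℝ^F` (zero mean, identity covariance). -/
def stdGauss (F : ℕ) : Measure (Fin F → ℝ) := Measure.pi fun _ => gaussianReal 0 1

/-- `T(x_i,x_j) = E[σ(uᵀx_i)·σ(uᵀx_j)]` for `u` standard Gaussian. -/
def Tker {F : ℕ} (σ : ℝ → ℝ) (xi xj : Fin F → ℝ) : ℝ :=
  ∫ u, σ (dot u xi) * σ (dot u xj) ∂ stdGauss F

/-- `Ṫ(x_i,x_j) = E[σ̇(uᵀx_i)·σ̇(uᵀx_j)]` for `u` standard Gaussian. -/
def Tdot {F : ℕ} (σ : ℝ → ℝ) (xi xj : Fin F → ℝ) : ℝ :=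
  ∫ u, deriv σ (dot u xi) * deriv σ (dot u xj) ∂ stdGauss F

/-- The scaled error function with scaling factor `α`:
`σ(p) = (1/√π)·∫₀^{αp} e^{−t²} dt + 1/2`. -/
def erfScaled (α : ℝ) (p : ℝ) : ℝ :=
  (1 / Real.sqrt Real.pi) * (∫ t in (0:ℝ)..(α * p), Real.exp (-(t^2))) + 1/2

/-!
Since `erfScaled α` takes values in `(0, 1)` and satisfies `σ(-p) = 1 - σ(p)`, the symmetry
`u ↦ -u` of the Gaussian gives
`2·T = E[σ(uᵀxᵢ)σ(uᵀxⱼ) + (1 - σ(uᵀxᵢ))(1 - σ(uᵀxⱼ))] = 1 - E[σᵢ(1 - σⱼ) + σⱼ(1 - σᵢ)] < 1`,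
while `T > 0` trivially. With `r = 2T ∈ (0, 1)` the kernel is
`2·D·r^(D-1)·Σ·Ṫ + r^D`, which tends to `0` whatever the value of `Σ·Ṫ`.
-/

open Real Set

lemma integrable_exp_neg_sq : Integrable fun t : ℝ => exp (-t ^ 2) := by
  simpa using integrable_exp_neg_mul_sq (b := 1) one_pos

lemma intervalIntegral_exp_neg_sq_neg (c : ℝ) :
    ∫ t in (0:ℝ)..-c, exp (-t ^ 2) = -∫ t in (0:ℝ)..c, exp (-t ^ 2) := by
  rw [intervalIntegral.integral_symm, ← neg_zero, ← intervalIntegral.integral_comp_neg]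
  simp only [neg_sq, neg_zero]

lemma intervalIntegral_exp_neg_sq_lt {c : ℝ} (hc : 0 ≤ c) :
    ∫ t in (0:ℝ)..c, exp (-t ^ 2) < √π / 2 := by
  have h_half : ∫ t in Ioi (0:ℝ), exp (-t ^ 2) = √π / 2 := by
    simpa using integral_gaussian_Ioi 1
  have h_tail : 0 < ∫ t in Ioi c, exp (-t ^ 2) := by
    rw [setIntegral_pos_iff_support_of_nonneg_ae
      (.of_forall fun t => (exp_pos _).le) integrable_exp_neg_sq.integrableOn]
    simp [Function.support, (exp_pos _).ne']
  rw [← intervalIntegral.integral_Ioi_sub_Ioi integrable_exp_neg_sq.integrableOn hc]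
  linarith

lemma abs_intervalIntegral_exp_neg_sq_lt (c : ℝ) :
    |∫ t in (0:ℝ)..c, exp (-t ^ 2)| < √π / 2 := by
  have hnonneg {c : ℝ} (hc : 0 ≤ c) : 0 ≤ ∫ t in (0:ℝ)..c, exp (-t ^ 2) :=
    intervalIntegral.integral_nonneg hc fun t _ => (exp_pos _).le
  rcases le_total 0 c with hc | hc
  · rw [abs_of_nonneg (hnonneg hc)]
    exact intervalIntegral_exp_neg_sq_lt hc
  · have hc' : 0 ≤ -c := neg_nonneg.mpr hc
    rw [← abs_neg, ← intervalIntegral_exp_neg_sq_neg, abs_of_nonneg (hnonneg hc')]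
    exact intervalIntegral_exp_neg_sq_lt hc'

lemma erfScaled_mem_Ioo (α p : ℝ) : erfScaled α p ∈ Ioo 0 1 := by
  set I := ∫ t in (0:ℝ)..α * p, exp (-t ^ 2)
  obtain ⟨hI_lower, hI_upper⟩ := abs_lt.mp (abs_intervalIntegral_exp_neg_sq_lt (α * p))
  have hπ : 0 < √π := sqrt_pos.mpr pi_pos
  have h_lower : -(1 / 2) < I / √π := by rw [lt_div_iff₀ hπ]; linarith
  have h_upper : I / √π < 1 / 2 := by rw [div_lt_iff₀ hπ]; linarith
  rw [erfScaled, mem_Ioo, one_div_mul_eq_div]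
  constructor <;> linarith

lemma erfScaled_neg (α p : ℝ) : erfScaled α (-p) = 1 - erfScaled α p := by
  rw [erfScaled, erfScaled, mul_neg, intervalIntegral_exp_neg_sq_neg]
  ring

lemma continuous_erfScaled (α : ℝ) : Continuous (erfScaled α) := by
  have h : Continuous fun c : ℝ => ∫ t in (0:ℝ)..c, exp (-t ^ 2) :=
    intervalIntegral.continuous_primitive (fun _ _ => integrable_exp_neg_sq.intervalIntegrable) 0
  unfold erfScaled
  fun_prop

lemma integral_pos_of_forall_pos {E : Type*} [MeasurableSpace E] {μ : Measure E} [NeZero μ]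
    {f : E → ℝ} (hf : Integrable f μ) (hpos : ∀ x, 0 < f x) : 0 < ∫ x, f x ∂μ := by
  rw [integral_pos_iff_support_of_nonneg (fun x => (hpos x).le) hf]
  simp [Function.support, (hpos _).ne', NeZero.ne μ]

lemma integral_mul_mem_Ioo_of_neg_eq_one_sub {E : Type*} [MeasurableSpace E] [AddGroup E]
    [MeasurableNeg E] (μ : Measure E) [IsProbabilityMeasure μ] [μ.IsNegInvariant]
    {a b : E → ℝ} (ha : Measurable a) (hb : Measurable b)
    (ha01 : ∀ x, a x ∈ Ioo 0 1) (hb01 : ∀ x, b x ∈ Ioo 0 1)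
    (ha_neg : ∀ x, a (-x) = 1 - a x) (hb_neg : ∀ x, b (-x) = 1 - b x) :
    0 < ∫ x, a x * b x ∂μ ∧ 2 * ∫ x, a x * b x ∂μ < 1 := by
  have hab : Integrable (fun x => a x * b x) μ := by
    refine .of_bound (ha.mul hb).aestronglyMeasurable 1 (.of_forall fun x => ?_)
    obtain ⟨⟨ha0, ha1⟩, ⟨hb0, hb1⟩⟩ := And.intro (ha01 x) (hb01 x)
    rw [Real.norm_eq_abs, abs_of_pos (mul_pos ha0 hb0)]
    nlinarith
  refine ⟨integral_pos_of_forall_pos hab fun x => mul_pos (ha01 x).1 (hb01 x).1, ?_⟩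
  have hab_neg : Integrable (fun x => a (-x) * b (-x)) μ := hab.comp_neg
  have hab_sum : Integrable (fun x => a x * b x + a (-x) * b (-x)) μ := hab.add hab_neg
  have h_sym : ∫ x, (a x * b x + a (-x) * b (-x)) ∂μ = 2 * ∫ x, a x * b x ∂μ := by
    rw [integral_add hab hab_neg, integral_neg_eq_self (fun x => a x * b x) μ]
    ring
  -- `1 - (a b + a(-·) b(-·)) = a (1 - b) + b (1 - a)` is positive everywhere
  have h_gap : 0 < ∫ x, (1 - (a x * b x + a (-x) * b (-x))) ∂μ := by
    refine integral_pos_of_forall_pos ((integrable_const 1).sub hab_sum) fun x => ?_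
    obtain ⟨⟨ha0, ha1⟩, ⟨hb0, hb1⟩⟩ := And.intro (ha01 x) (hb01 x)
    rw [ha_neg, hb_neg]
    nlinarith [mul_pos ha0 (sub_pos.mpr hb1), mul_pos hb0 (sub_pos.mpr ha1)]
  rw [integral_sub (integrable_const 1) hab_sum, h_sym, integral_const, probReal_univ,
    one_smul] at h_gap
  linarith

instance isNegInvariant_gaussianReal_zero (v : NNReal) : (gaussianReal 0 v).IsNegInvariant :=
  ⟨by simpa [Measure.neg_def] using gaussianReal_map_neg (μ := 0) (v := v)⟩

instance (F : ℕ) : IsProbabilityMeasure (stdGauss F) := by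
  unfold stdGauss; infer_instance

instance (F : ℕ) : (stdGauss F).IsNegInvariant := by
  unfold stdGauss; infer_instance

lemma dot_neg_left {F : ℕ} (u x : Fin F → ℝ) : dot (-u) x = -dot u x := by
  simp [dot, Finset.sum_neg_distrib]

lemma measurable_dot_left {F : ℕ} (x : Fin F → ℝ) : Measurable fun u : Fin F → ℝ => dot u x := by
  unfold dot; fun_prop

lemma Tker_pos_and_two_mul_lt_one {F : ℕ} {σ : ℝ → ℝ} (hσ : Measurable σ)
    (hσ01 : ∀ p, σ p ∈ Ioo 0 1) (hσ_neg : ∀ p, σ (-p) = 1 - σ p) (xi xj : Fin F → ℝ) :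
    0 < Tker σ xi xj ∧ 2 * Tker σ xi xj < 1 :=
  integral_mul_mem_Ioo_of_neg_eq_one_sub (stdGauss F)
    (hσ.comp (measurable_dot_left xi)) (hσ.comp (measurable_dot_left xj))
    (fun _ => hσ01 _) (fun _ => hσ01 _)
    (fun u => by simp only [dot_neg_left, hσ_neg])
    (fun u => by simp only [dot_neg_left, hσ_neg])

lemma tendsto_two_pow_mul_mul_pow_pred {t : ℝ} (ht : |2 * t| < 1) :
    Tendsto (fun D : ℕ => (2:ℝ) ^ D * D * t ^ (D - 1)) atTop (nhds 0) := by
  rw [← tendsto_add_atTop_iff_nat 1]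
  have h := ((tendsto_self_mul_const_pow_of_abs_lt_one ht).add
    (tendsto_pow_atTop_nhds_zero_of_abs_lt_one ht)).const_mul 2
  rw [add_zero, mul_zero] at h
  refine h.congr fun D => ?_
  simp only [Nat.add_sub_cancel, Nat.cast_add, Nat.cast_one, pow_succ, mul_pow]
  ring

theorem stmt17_general (F : ℕ) (α : ℝ) (xi xj : Fin F → ℝ) :
    Filter.Tendsto
      (fun D : ℕ =>
        (2:ℝ)^D * (D : ℝ) * dot xi xj * (Tker (erfScaled α) xi xj)^(D-1) *
            Tdot (erfScaled α) xi xj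
          + (2 * Tker (erfScaled α) xi xj)^D)
      Filter.atTop (nhds 0) := by
  obtain ⟨hT_pos, hT_lt⟩ := Tker_pos_and_two_mul_lt_one (continuous_erfScaled α).measurable
    (erfScaled_mem_Ioo α) (erfScaled_neg α) xi xj
  have hT : |2 * Tker (erfScaled α) xi xj| < 1 := abs_lt.mpr ⟨by linarith, hT_lt⟩
  have h := ((tendsto_two_pow_mul_mul_pow_pred hT).mul_const
    (dot xi xj * Tdot (erfScaled α) xi xj)).add (tendsto_pow_atTop_nhds_zero_of_abs_lt_one hT)
  rw [zero_mul, zero_add] at h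
  refine h.congr fun D => ?_
  ring

/-- For the scaled error function with `α > 0`, the limiting perfect-binary-tree NTK
`Θ^{(D,PB)} = 2^D·D·Σ·T^{D−1}·Ṫ + (2·T)^D` degenerates as the depth grows:
`lim_{D→∞} Θ^{(D,PB)}(x_i,x_j) = 0`. -/
theorem stmt17 (F : ℕ) (α : ℝ) (hα : 0 < α) (xi xj : Fin F → ℝ) :
    Filter.Tendsto
      (fun D : ℕ =>
        (2:ℝ)^D * (D : ℝ) * dot xi xj * (Tker (erfScaled α) xi xj)^(D-1) *
            Tdot (erfScaled α) xi xj
          + (2 * Tker (erfScaled α) xi xj)^D)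
      Filter.atTop (nhds 0) :=
  stmt17_general F α xi xj

end
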